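/- Let μ be a k-bounded partition of n, and let r be the highest row of the (k+1)-core 𝔠(μ) containing a removable corner; let i be the (k+1)-residue of that corner. Then no removable corner of 𝔠(μ) of residue i lies in a higher row, and s_i(𝔠(μ)) = 𝔠(μ − e_r), where μ − e_r is μ with one box removed from row r. Consequently λ = μ − e_r satisfies λ ⊆ μ and λ^{ω_k} ⊆ μ^{ω_k}. -/

import Mathlib

open scoped Classical

/-- A partition given as a weakly decreasing, finitely supported
function `ℕ → ℕ` (row `i`, counted from the bottom, has `p i` cells). -/
def IsPartitionFun (p : ℕ → ℕ) : Prop :=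
  (∀ i, p (i + 1) ≤ p i) ∧ ∃ N, ∀ i, N ≤ i → p i = 0

/-- Hook length of the square `(i, j)` (0-indexed) in the partition `p`. -/
noncomputable def hookLen (p : ℕ → ℕ) (i j : ℕ) : ℕ :=
  (p i - j) + Set.ncard {i' : ℕ | i < i' ∧ j < p i'}

/-- A partition is an `m`-core if no cell has hook length `m`. -/
def IsCore (m : ℕ) (p : ℕ → ℕ) : Prop :=
  ∀ i j, j < p i → hookLen p i j ≠ m

/-- Number of cells of row `i` of `p` whose hook length is at most `k`. -/
noncomputable def rowKB (k : ℕ) (p : ℕ → ℕ) (i : ℕ) : ℕ :=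
  Set.ncard {j : ℕ | j < p i ∧ hookLen p i j ≤ k}

/-- Number of cells of column `j` of `p` whose hook length is at most `k`. -/
noncomputable def colKB (k : ℕ) (p : ℕ → ℕ) (j : ℕ) : ℕ :=
  Set.ncard {i : ℕ | j < p i ∧ hookLen p i j ≤ k}

/-- The `(k+1)`-residue of the square `(i, j)`, namely `j - i mod (k+1)`. -/
def res (k i j : ℕ) : ZMod (k + 1) := (j : ZMod (k + 1)) - (i : ZMod (k + 1))

/-- The conjugate partition. -/
noncomputable def conjFun (p : ℕ → ℕ) (j : ℕ) : ℕ := Set.ncard {i : ℕ | j < p i}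


/-- The shape obtained from `γ` by deleting all removable corners of residue `r`. -/
noncomputable def removeAll (k : ℕ) (r : ZMod (k + 1)) (γ : ℕ → ℕ) : ℕ → ℕ :=
  fun i => γ i - (if 0 < γ i ∧ γ (i + 1) < γ i ∧ res k i (γ i - 1) = r then 1 else 0)

/-!
Encode a partition `p` by its beta-numbers `β t = p t - t`, a strictly decreasing sequence whose
range `B` determines `p`. The cells of column `j` sit exactly in the rows with `β t > g j`, where
`g j` runs through the complement of `B`, and the hook of cell `(t, j)` is `β t - g j`. So
`rowKB k p t` counts the non-beads of `[β t - k, β t)`, `colKB k p j` counts the beads of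
`(g j, g j + k]`, and both are read off from `countAbove p v = #{t | v < β t}`.

A `(k+1)`-core is a partition with `B - (k+1) ⊆ B`. When `r` is the top row, the removable
corners of residue `res k r (δ r - 1)` are the rows whose beta-number lies on the residue class
of `β r` modulo `k + 1` and is at least `β r`; removing them moves those beads down by one,
which lowers `countAbove v` exactly when a moved bead sits at `v + 1`. Two more consequences of
the core property (the bead `β t - k - 1` is present, the position `β t - k` never holds a moved
bead) then give the row counts, and the same bookkeeping at the gaps gives the column bound.
-/

open Set

lemma ncard_setOf_eq_of_forall_lt_iff {P : ℕ → Prop} {n : ℕ} (h : ∀ t, t < n ↔ P t) :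
    {t | P t}.ncard = n := by
  rw [show {t | P t} = Iio n from Set.ext fun t => (h t).symm, ncard_Iio_nat]

lemma lt_ncard_setOf_iff {P : ℕ → Prop} (hP : ∀ s t, s ≤ t → P t → P s) (hfin : ∃ N, ¬ P N)
    (t : ℕ) : t < {s | P s}.ncard ↔ P t := by
  have key : ∀ t, t < Nat.find hfin ↔ P t := fun t =>
    ⟨fun h => not_not.1 (Nat.find_min hfin h),
      fun h => lt_of_not_ge fun hle => Nat.find_spec hfin (hP _ _ hle h)⟩
  rw [ncard_setOf_eq_of_forall_lt_iff key, key]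

lemma Set.ncard_Ioc_int (a b : ℤ) : (Ioc a b).ncard = (b - a).toNat := by
  rw [← Finset.coe_Ioc, ncard_coe_finset, Int.card_Ioc]

lemma Int.ModEq.eq_or_add_le {n a b : ℤ} (hn : 0 < n) (h : a ≡ b [ZMOD n]) (hab : a ≤ b) :
    a = b ∨ a + n ≤ b := by
  obtain ⟨m, hm⟩ := Int.modEq_iff_add_fac.1 h
  rcases lt_trichotomy m 0 with hm0 | rfl | hm0
  · nlinarith
  · left
    simpa using hm.symm
  · right
    nlinarith

def beta (p : ℕ → ℕ) (t : ℕ) : ℤ := p t - t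

def betaSet (p : ℕ → ℕ) : Set ℤ := range (beta p)

noncomputable def gap (p : ℕ → ℕ) (j : ℕ) : ℤ := j + 1 - conjFun p j

noncomputable def countAbove (p : ℕ → ℕ) (v : ℤ) : ℕ := {t | v < beta p t}.ncard

namespace IsPartitionFun

variable {p : ℕ → ℕ}

lemma antitone (hp : IsPartitionFun p) : Antitone p := antitone_nat_of_succ_le hp.1

lemma beta_add_le (hp : IsPartitionFun p) {s t : ℕ} (h : s ≤ t) : beta p t + t ≤ beta p s + s := by
  have := hp.antitone h
  simp only [beta]
  omega

lemma beta_strictAnti (hp : IsPartitionFun p) : StrictAnti (beta p) := fun s t h => by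
  have := hp.beta_add_le h.le
  omega

lemma lt_conjFun_iff (hp : IsPartitionFun p) {a j : ℕ} : a < conjFun p j ↔ j < p a := by
  obtain ⟨N, hN⟩ := hp.2
  exact lt_ncard_setOf_iff (fun s t hst h => h.trans_le (hp.antitone hst))
    ⟨N, by simp [hN N le_rfl]⟩ a

lemma lt_countAbove_iff (hp : IsPartitionFun p) {v : ℤ} {t : ℕ} :
    t < countAbove p v ↔ v < beta p t := by
  refine lt_ncard_setOf_iff (fun s t hst h => h.trans_le (hp.beta_strictAnti.antitone hst))
    ⟨(p 0 - v).toNat, fun h => ?_⟩ t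
  have := hp.beta_add_le (Nat.zero_le (p 0 - v).toNat)
  simp only [beta] at this h
  omega

lemma countAbove_anti (hp : IsPartitionFun p) : Antitone (countAbove p) := fun a b hab => by
  by_contra! h
  have := hp.lt_countAbove_iff.1 h
  exact lt_irrefl _ (hp.lt_countAbove_iff.2 (hab.trans_lt this))

lemma gap_strictMono (hp : IsPartitionFun p) : StrictMono (gap p) := fun i j hij => by
  have : conjFun p j ≤ conjFun p i := by
    by_contra! h
    exact absurd (hp.lt_conjFun_iff.2 ((hp.lt_conjFun_iff.1 h).trans' hij))
      (lt_irrefl _)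
  simp only [gap]
  omega

lemma gap_lt_beta_iff (hp : IsPartitionFun p) {a j : ℕ} : gap p j < beta p a ↔ j < p a := by
  rw [← hp.lt_conjFun_iff]
  rcases lt_or_ge a (conjFun p j) with h | h
  · have := hp.lt_conjFun_iff.1 h
    simp only [gap, beta]
    omega
  · have := mt hp.lt_conjFun_iff.2 (not_lt.2 h)
    simp only [gap, beta]
    omega

lemma gap_notMem_betaSet (hp : IsPartitionFun p) (j : ℕ) : gap p j ∉ betaSet p := by
  rintro ⟨a, ha⟩
  rcases lt_or_ge a (conjFun p j) with h | h
  · have := hp.lt_conjFun_iff.1 h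
    simp only [gap, beta] at ha
    omega
  · have := mt hp.lt_conjFun_iff.2 (not_lt.2 h)
    simp only [gap, beta] at ha
    omega

lemma hookLen_eq_beta_sub_gap (hp : IsPartitionFun p) {a j : ℕ} (h : j < p a) :
    (hookLen p a j : ℤ) = beta p a - gap p j := by
  have hleg : {i | a < i ∧ j < p i} = Ioo a (conjFun p j) := by
    ext i
    simp [hp.lt_conjFun_iff]
  have := hp.lt_conjFun_iff.2 h
  rw [hookLen, hleg, ncard_Ioo_nat]
  simp only [beta, gap]
  omega

lemma exists_gap_eq (hp : IsPartitionFun p) {x : ℤ} (hx : x ∉ betaSet p) : ∃ j, gap p j = x := by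
  set C := countAbove p x
  have hC : beta p C < x :=
    lt_of_le_of_ne (not_lt.1 fun h => lt_irrefl C (hp.lt_countAbove_iff.2 h)) fun h => hx ⟨C, h⟩
  -- the column must satisfy `conjFun p j = C`, which forces `j = x - 1 + C`
  obtain ⟨j, hj⟩ : ∃ j : ℕ, (j : ℤ) = x - 1 + C :=
    ⟨(x - 1 + C).toNat, by simp only [beta] at hC; omega⟩
  have hconj : conjFun p j = C := by
    refine ncard_setOf_eq_of_forall_lt_iff fun t => ⟨fun ht => ?_, fun ht => ?_⟩
    · have h1 := hp.lt_countAbove_iff.1 (show C - 1 < C by omega)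
      have h2 := hp.beta_add_le (show t ≤ C - 1 by omega)
      simp only [beta] at h1 h2
      omega
    · by_contra! hle
      have := hp.beta_add_le hle
      simp only [beta] at this hC
      omega
  exact ⟨j, by simp only [gap, hconj]; omega⟩

lemma ncard_Ioc_inter_betaSet_add (hp : IsPartitionFun p) {a b : ℤ} (hab : a ≤ b) :
    (Ioc a b ∩ betaSet p).ncard + countAbove p b = countAbove p a := by
  have himage : Ioc a b ∩ betaSet p = beta p '' Ico (countAbove p b) (countAbove p a) := by
    ext x
    simp only [mem_inter_iff, mem_Ioc, betaSet, mem_range, mem_image, mem_Ico, ← not_lt,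
      hp.lt_countAbove_iff]
    constructor
    · rintro ⟨⟨h1, h2⟩, t, rfl⟩
      exact ⟨t, ⟨h2, h1⟩, rfl⟩
    · rintro ⟨t, ⟨h1, h2⟩, rfl⟩
      exact ⟨⟨h2, h1⟩, t, rfl⟩
  rw [himage, ncard_image_of_injective _ hp.beta_strictAnti.injective, ncard_Ico_nat]
  have := hp.countAbove_anti hab
  omega

lemma countAbove_sub_one (hp : IsPartitionFun p) (v : ℤ) :
    countAbove p (v - 1) = countAbove p v + if v ∈ betaSet p then 1 else 0 := by
  have h := hp.ncard_Ioc_inter_betaSet_add (sub_one_lt v).le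
  have hIoc : Ioc (v - 1) v = {v} := by
    ext x
    simp only [mem_Ioc, mem_singleton_iff]
    omega
  rw [hIoc] at h
  split_ifs with hv
  · rw [singleton_inter_of_mem hv, ncard_singleton] at h
    omega
  · rw [singleton_inter_of_notMem hv, ncard_empty] at h
    omega

lemma countAbove_beta_sub_one (hp : IsPartitionFun p) (t : ℕ) :
    countAbove p (beta p t - 1) = t + 1 :=
  ncard_setOf_eq_of_forall_lt_iff fun s => by
    rw [Int.sub_one_lt_iff, hp.beta_strictAnti.le_iff_ge, Nat.lt_succ_iff]

lemma countAbove_gap (hp : IsPartitionFun p) (j : ℕ) : countAbove p (gap p j) = conjFun p j := by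
  simp only [countAbove, hp.gap_lt_beta_iff, conjFun]

lemma rowKB_eq_ncard (hp : IsPartitionFun p) (k t : ℕ) :
    rowKB k p t = (Ioc (beta p t - k - 1) (beta p t - 1) \ betaSet p).ncard := by
  rw [rowKB, ← ncard_image_of_injective _ hp.gap_strictMono.injective]
  congr 1
  ext x
  simp only [mem_image, mem_ofPred_eq, mem_sdiff, mem_Ioc]
  constructor
  · rintro ⟨j, ⟨hj, hk⟩, rfl⟩
    have := hp.hookLen_eq_beta_sub_gap hj
    have := hp.gap_lt_beta_iff.2 hj
    exact ⟨⟨by omega, by omega⟩, hp.gap_notMem_betaSet j⟩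
  · rintro ⟨⟨h1, h2⟩, hx⟩
    obtain ⟨j, rfl⟩ := hp.exists_gap_eq hx
    have hj := hp.gap_lt_beta_iff.1 (show gap p j < beta p t by omega)
    have := hp.hookLen_eq_beta_sub_gap hj
    exact ⟨j, ⟨hj, by omega⟩, rfl⟩

lemma colKB_eq_ncard (hp : IsPartitionFun p) (k j : ℕ) :
    colKB k p j = (Ioc (gap p j) (gap p j + k) ∩ betaSet p).ncard := by
  rw [colKB, ← ncard_image_of_injective _ hp.beta_strictAnti.injective]
  congr 1
  ext x
  simp only [mem_image, mem_ofPred_eq, mem_inter_iff, mem_Ioc, betaSet, mem_range]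
  constructor
  · rintro ⟨a, ⟨ha, hk⟩, rfl⟩
    have := hp.hookLen_eq_beta_sub_gap ha
    have := hp.gap_lt_beta_iff.2 ha
    exact ⟨⟨by omega, by omega⟩, a, rfl⟩
  · rintro ⟨⟨h1, h2⟩, a, rfl⟩
    have ha := hp.gap_lt_beta_iff.1 h1
    have := hp.hookLen_eq_beta_sub_gap ha
    exact ⟨a, ⟨ha, by omega⟩, rfl⟩

lemma rowKB_add_countAbove (hp : IsPartitionFun p) (k t : ℕ) :
    rowKB k p t + countAbove p (beta p t - k - 1) = k + 1 + t := by
  have hsplit := ncard_inter_add_ncard_sdiff_eq_ncard (Ioc (beta p t - k - 1) (beta p t - 1))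
    (betaSet p) (finite_Ioc _ _)
  have hbeads := hp.ncard_Ioc_inter_betaSet_add (show beta p t - k - 1 ≤ beta p t - 1 by omega)
  rw [ncard_Ioc_int, hp.countAbove_beta_sub_one] at *
  rw [hp.rowKB_eq_ncard]
  omega

lemma colKB_add_countAbove (hp : IsPartitionFun p) (k j : ℕ) :
    colKB k p j + countAbove p (gap p j + k) = conjFun p j := by
  rw [hp.colKB_eq_ncard, ← hp.countAbove_gap]
  exact hp.ncard_Ioc_inter_betaSet_add (by omega)

lemma removable_iff_beta_sub_one_notMem (hp : IsPartitionFun p) (t : ℕ) :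
    (0 < p t ∧ p (t + 1) < p t) ↔ beta p t - 1 ∉ betaSet p := by
  constructor
  · rintro ⟨h0, h1⟩ ⟨s, hs⟩
    rcases le_or_gt s t with hst | hst
    · have := hp.beta_add_le hst
      omega
    · have := hp.beta_add_le (show t + 1 ≤ s by omega)
      simp only [beta] at *
      omega
  · intro h
    by_contra hrem
    have := hp.1 t
    exact h ⟨t + 1, by simp only [beta]; omega⟩

lemma ncard_setOf_beta_eq (hp : IsPartitionFun p) (y : ℤ) (Q : Prop) :
    {t | beta p t = y ∧ Q}.ncard = if y ∈ betaSet p ∧ Q then 1 else 0 := by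
  split_ifs with h
  · obtain ⟨⟨t, rfl⟩, hQ⟩ := h
    rw [← ncard_singleton t]
    congr 1
    ext s
    simp [hp.beta_strictAnti.injective.eq_iff, hQ]
  · rw [← ncard_empty ℕ]
    congr 1
    ext s
    simp only [mem_ofPred_eq, mem_empty_iff_false, iff_false]
    exact fun ⟨hs, hQ⟩ => h ⟨⟨s, hs⟩, hQ⟩

lemma finite_setOf_lt_beta (hp : IsPartitionFun p) (v : ℤ) : {t | v < beta p t}.Finite :=
  (finite_Iio (countAbove p v)).subset fun _ ht => hp.lt_countAbove_iff.2 ht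

lemma finite_setOf_lt_apply (hp : IsPartitionFun p) (j : ℕ) : {t | j < p t}.Finite :=
  (finite_Iio (conjFun p j)).subset fun _ ht => hp.lt_conjFun_iff.2 ht

lemma eq_zero_of_forall_not_removable (hp : IsPartitionFun p) {r : ℕ}
    (hhigh : ∀ r', r < r' → ¬ (0 < p r' ∧ p (r' + 1) < p r')) : ∀ t, r < t → p t = 0 := by
  obtain ⟨N, hN⟩ := hp.2
  suffices ∀ d t, r < t → N ≤ t + d → p t = 0 from fun t ht => this N t ht (by omega)
  intro d
  induction d with
  | zero => exact fun t _ h => hN t (by omega)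
  | succ d ih =>
    intro t ht h
    have := ih (t + 1) (by omega) (by omega)
    have := hhigh t ht
    omega

lemma beta_eq_gap_add_one_iff (hp : IsPartitionFun p) {t j : ℕ} (ht : p (t + 1) < p t) :
    beta p t = gap p j + 1 ↔ p t = j + 1 := by
  have hconj : beta p t = gap p j + 1 ∨ p t = j + 1 → conjFun p j = t + 1 := by
    intro h
    apply le_antisymm
    · by_contra! hlt
      have h1 := hp.lt_conjFun_iff.1 hlt
      have h2 := hp.gap_lt_beta_iff.2 h1
      have h3 := hp.beta_strictAnti (show t < t + 1 by omega)
      have h4 : beta p (t + 1) ≠ gap p j := fun h => hp.gap_notMem_betaSet j ⟨t + 1, h⟩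
      rcases h with h | h
      · omega
      · omega
    · refine hp.lt_conjFun_iff.2 ?_
      rcases h with h | h
      · exact hp.gap_lt_beta_iff.1 (by omega)
      · omega
  constructor
  · intro h
    have := hconj (Or.inl h)
    simp only [beta, gap] at h this
    omega
  · intro h
    have := hconj (Or.inr h)
    simp only [beta, gap]
    omega

end IsPartitionFun

noncomputable def removeCorners (p : ℕ → ℕ) (P : ℤ → Prop) (t : ℕ) : ℕ :=
  p t - if P (beta p t) then 1 else 0

section RemoveCorners

variable {p : ℕ → ℕ} {P : ℤ → Prop} (hP : ∀ t, P (beta p t) → 0 < p t ∧ p (t + 1) < p t)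
include hP

lemma beta_removeCorners (t : ℕ) :
    beta (removeCorners p P) t = beta p t - if P (beta p t) then 1 else 0 := by
  rw [show beta (removeCorners p P) t = (removeCorners p P t : ℤ) - t from rfl, removeCorners]
  by_cases h : P (beta p t)
  · have := (hP t h).1
    rw [if_pos h, if_pos h, beta]
    omega
  · rw [if_neg h, if_neg h, beta]
    omega

lemma isPartitionFun_removeCorners (hp : IsPartitionFun p) :
    IsPartitionFun (removeCorners p P) := by
  refine ⟨fun t => ?_, ?_⟩
  · have h1 : removeCorners p P (t + 1) ≤ p (t + 1) := Nat.sub_le _ _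
    have h2 := hp.1 t
    rw [show removeCorners p P t = p t - if P (beta p t) then 1 else 0 from rfl]
    by_cases h : P (beta p t)
    · have := hP t h
      rw [if_pos h]
      omega
    · rw [if_neg h]
      omega
  · obtain ⟨N, hN⟩ := hp.2
    exact ⟨N, fun t ht => by simp [removeCorners, hN t ht]⟩

lemma IsPartitionFun.countAbove_removeCorners (hp : IsPartitionFun p) (v : ℤ) :
    countAbove (removeCorners p P) v + (if v + 1 ∈ betaSet p ∧ P (v + 1) then 1 else 0)
      = countAbove p v := by
  have hmoved : {t | beta p t = v + 1 ∧ P (v + 1)} ⊆ {t | v < beta p t} := fun t ht => by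
    simp only [mem_ofPred_eq] at ht ⊢
    omega
  have hsdiff : {t | v < beta (removeCorners p P) t}
      = {t | v < beta p t} \ {t | beta p t = v + 1 ∧ P (v + 1)} := by
    ext t
    simp only [mem_sdiff, mem_ofPred_eq, beta_removeCorners hP]
    by_cases hPt : P (beta p t)
    · have hmoved_iff : beta p t = v + 1 ∧ P (v + 1) ↔ beta p t = v + 1 :=
        and_iff_left_of_imp fun h => h ▸ hPt
      rw [if_pos hPt, hmoved_iff]
      omega
    · have hn : ¬ (beta p t = v + 1 ∧ P (v + 1)) := fun h => hPt (h.1 ▸ h.2)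
      simp only [hPt, hn, if_false, sub_zero, not_false_eq_true, and_true]
  rw [countAbove, countAbove, hsdiff, ← hp.ncard_setOf_beta_eq,
    ncard_sdiff_add_ncard_of_subset hmoved (hp.finite_setOf_lt_beta v)]

lemma IsPartitionFun.conjFun_removeCorners (hp : IsPartitionFun p) (j : ℕ) :
    conjFun (removeCorners p P) j + (if gap p j + 1 ∈ betaSet p ∧ P (gap p j + 1) then 1 else 0)
      = conjFun p j := by
  have hmoved : {t | beta p t = gap p j + 1 ∧ P (gap p j + 1)} ⊆ {t | j < p t} := fun t ht =>
    hp.gap_lt_beta_iff.1 (by simp only [mem_ofPred_eq] at ht; omega)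
  have hsdiff : {t | j < removeCorners p P t}
      = {t | j < p t} \ {t | beta p t = gap p j + 1 ∧ P (gap p j + 1)} := by
    ext t
    simp only [mem_sdiff, mem_ofPred_eq]
    rw [show removeCorners p P t = p t - if P (beta p t) then 1 else 0 from rfl]
    by_cases hPt : P (beta p t)
    · have hmoved_iff : beta p t = gap p j + 1 ∧ P (gap p j + 1) ↔ p t = j + 1 :=
        (and_iff_left_of_imp fun h => h ▸ hPt).trans (hp.beta_eq_gap_add_one_iff (hP t hPt).2)
      rw [if_pos hPt, hmoved_iff]
      omega
    · have hn : ¬ (beta p t = gap p j + 1 ∧ P (gap p j + 1)) := fun h => hPt (h.1 ▸ h.2)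
      simp only [hPt, hn, if_false, Nat.sub_zero, not_false_eq_true, and_true]
  rw [conjFun, conjFun, hsdiff, ← hp.ncard_setOf_beta_eq,
    ncard_sdiff_add_ncard_of_subset hmoved (hp.finite_setOf_lt_apply j)]

lemma IsPartitionFun.gap_removeCorners (hp : IsPartitionFun p) (j : ℕ) :
    gap (removeCorners p P) j
      = gap p j + if gap p j + 1 ∈ betaSet p ∧ P (gap p j + 1) then 1 else 0 := by
  have h := hp.conjFun_removeCorners hP j
  by_cases hc : gap p j + 1 ∈ betaSet p ∧ P (gap p j + 1)
  · rw [if_pos hc] at h ⊢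
    rw [gap, gap]
    omega
  · rw [if_neg hc] at h ⊢
    rw [gap, gap]
    omega

end RemoveCorners

namespace IsCore

variable {k : ℕ} {p : ℕ → ℕ}

lemma sub_mem_betaSet (hc : IsCore (k + 1) p) (hp : IsPartitionFun p) {y : ℤ}
    (hy : y ∈ betaSet p) : y - (k + 1) ∈ betaSet p := by
  obtain ⟨t, rfl⟩ := hy
  by_contra h
  obtain ⟨j, hj⟩ := hp.exists_gap_eq h
  have hjt := hp.gap_lt_beta_iff.1 (show gap p j < beta p t by omega)
  have := hp.hookLen_eq_beta_sub_gap hjt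
  exact hc t j hjt (by omega)

lemma mem_betaSet_of_modEq (hc : IsCore (k + 1) p) (hp : IsPartitionFun p) {y z : ℤ}
    (hy : y ∈ betaSet p) (hzy : z ≤ y) (hmod : z ≡ y [ZMOD k + 1]) : z ∈ betaSet p := by
  obtain ⟨m, hm⟩ := Int.modEq_iff_add_fac.1 hmod
  lift m to ℕ using by nlinarith
  clear hmod hzy
  induction m generalizing y with
  | zero => simpa [hm] using hy
  | succ m ih => exact ih (hc.sub_mem_betaSet hp hy) (by push_cast at hm; linarith)

end IsCore

def OnRunnerAbove (n b y : ℤ) : Prop := y ≡ b [ZMOD n] ∧ b ≤ y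

section TopRow

variable {k r : ℕ} {p : ℕ → ℕ}

lemma mem_betaSet_iff_of_lt_beta_top (hp : IsPartitionFun p) (htop : ∀ t, r < t → p t = 0)
    {z : ℤ} (hz : z < beta p r) : z ∈ betaSet p ↔ z ≤ -(r + 1) := by
  constructor
  · rintro ⟨t, rfl⟩
    have hrt : r < t := hp.beta_strictAnti.lt_iff_gt.1 hz
    simp only [beta, htop t hrt] at *
    omega
  · intro h
    refine ⟨(-z).toNat, ?_⟩
    rw [beta, htop _ (by omega)]
    omega

lemma removable_top (htop : ∀ t, r < t → p t = 0) (hr : 0 < p r) : 0 < p r ∧ p (r + 1) < p r :=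
  ⟨hr, by rw [htop (r + 1) (by omega)]; exact hr⟩

lemma res_eq_beta_sub_one {t : ℕ} (ht : 0 < p t) :
    res k t (p t - 1) = ((beta p t - 1 : ℤ) : ZMod (k + 1)) := by
  rw [res, beta]
  push_cast [Nat.cast_sub ht]
  ring

namespace IsCore

variable (hc : IsCore (k + 1) p) (hp : IsPartitionFun p) (htop : ∀ t, r < t → p t = 0)
include hc hp htop

lemma beta_top_sub_mem : beta p r - (k + 2) ∈ betaSet p := by
  have h := (mem_betaSet_iff_of_lt_beta_top hp htop (show beta p r - (k + 1) < beta p r by omega)).1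
    (hc.sub_mem_betaSet hp ⟨r, rfl⟩)
  exact (mem_betaSet_iff_of_lt_beta_top hp htop (by omega)).2 (by omega)

lemma notMem_betaSet_of_onRunnerAbove (hr : 0 < p r) {x : ℤ}
    (hx : OnRunnerAbove (k + 1) (beta p r - 1) x) : x ∉ betaSet p := fun h =>
  (hp.removable_iff_beta_sub_one_notMem r).1 (removable_top htop hr)
    (hc.mem_betaSet_of_modEq hp h hx.2 hx.1.symm)

lemma removable_res_eq_iff (hr : 0 < p r) (t : ℕ) :
    (0 < p t ∧ p (t + 1) < p t ∧ res k t (p t - 1) = res k r (p r - 1)) ↔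
      OnRunnerAbove (k + 1) (beta p r) (beta p t) := by
  have hres : ∀ {t}, 0 < p t →
      (res k t (p t - 1) = res k r (p r - 1) ↔ beta p t ≡ beta p r [ZMOD k + 1]) := fun ht => by
    rw [res_eq_beta_sub_one ht, res_eq_beta_sub_one hr, ZMod.intCast_eq_intCast_iff]
    push_cast
    exact ⟨fun h => by simpa using h.add_right 1, fun h => h.sub_right 1⟩
  constructor
  · rintro ⟨h0, h1, hrt⟩
    have hmod := (hres h0).1 hrt
    refine ⟨hmod, not_lt.1 fun hlt => ?_⟩
    obtain ⟨m, hm⟩ := Int.modEq_iff_add_fac.1 hmod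
    have hle := (hmod.eq_or_add_le (by omega) hlt.le).resolve_left hlt.ne
    -- `β t - 1` would lie on the residue class of the bead `β r - (k + 2)`, and below it
    exact (hp.removable_iff_beta_sub_one_notMem t).1 ⟨h0, h1⟩
      (hc.mem_betaSet_of_modEq hp (hc.beta_top_sub_mem hp htop) (by omega)
        (Int.modEq_iff_add_fac.2 ⟨m - 1, by linear_combination hm⟩))
  · rintro ⟨hmod, hle⟩
    obtain ⟨m, hm⟩ := Int.modEq_iff_add_fac.1 hmod
    have hrem := (hp.removable_iff_beta_sub_one_notMem t).2
      (hc.notMem_betaSet_of_onRunnerAbove hp htop hr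
        ⟨Int.modEq_iff_add_fac.2 ⟨m, by linear_combination hm⟩, by omega⟩)
    exact ⟨hrem.1, hrem.2, (hres hrem.1).2 hmod⟩

lemma removable_of_onRunnerAbove (hr : 0 < p r) (t : ℕ)
    (h : OnRunnerAbove (k + 1) (beta p r) (beta p t)) : 0 < p t ∧ p (t + 1) < p t :=
  ((hc.removable_res_eq_iff hp htop hr t).2 h).imp_right And.left

lemma removeAll_eq_removeCorners (hr : 0 < p r) :
    removeAll k (res k r (p r - 1)) p = removeCorners p (OnRunnerAbove (k + 1) (beta p r)) := by
  funext t
  simp only [removeAll, removeCorners]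
  by_cases h : 0 < p t ∧ p (t + 1) < p t ∧ res k t (p t - 1) = res k r (p r - 1)
  · rw [if_pos h, if_pos ((hc.removable_res_eq_iff hp htop hr t).1 h)]
  · rw [if_neg h, if_neg (mt (hc.removable_res_eq_iff hp htop hr t).2 h)]

lemma not_onRunnerAbove_beta_sub (hr : 0 < p r) (t : ℕ) :
    ¬ OnRunnerAbove (k + 1) (beta p r) (beta p t - k) := fun ⟨hmod, hle⟩ => by
  obtain ⟨m, hm⟩ := Int.modEq_iff_add_fac.1 hmod
  exact hc.notMem_betaSet_of_onRunnerAbove hp htop hr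
    ⟨Int.modEq_iff_add_fac.2 ⟨m - 1, by linear_combination hm⟩, by omega⟩ ⟨t, rfl⟩

lemma rowKB_removeAll (hr : 0 < p r) (j : ℕ) :
    rowKB k (removeAll k (res k r (p r - 1)) p) j + (if j = r then 1 else 0) = rowKB k p j := by
  have hP := hc.removable_of_onRunnerAbove hp htop hr
  rw [hc.removeAll_eq_removeCorners hp htop hr]
  have hrow' := (isPartitionFun_removeCorners hP hp).rowKB_add_countAbove k j
  have hrow := hp.rowKB_add_countAbove k j
  rw [beta_removeCorners hP] at hrow'
  by_cases hj : OnRunnerAbove (k + 1) (beta p r) (beta p j)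
  · -- the window of row `j` moves down by one onto the bead `β j - k - 1`, which itself
    -- moves unless `j = r`
    rw [if_pos hj] at hrow'
    have hcount' := hp.countAbove_removeCorners hP (beta p j - 1 - k - 1)
    have hcount := hp.countAbove_sub_one (beta p j - k - 1)
    have hmem : beta p j - k - 1 ∈ betaSet p := by
      simpa [sub_sub] using hc.sub_mem_betaSet hp ⟨j, rfl⟩
    rw [show beta p j - 1 - k - 1 + 1 = beta p j - k - 1 by ring] at hcount'
    rw [show beta p j - k - 1 - 1 = beta p j - 1 - k - 1 by ring, if_pos hmem] at hcount
    obtain ⟨m, hm⟩ := Int.modEq_iff_add_fac.1 hj.1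
    rcases hj.1.symm.eq_or_add_le (by omega) hj.2 with h | h
    · have hjr : j = r := hp.beta_strictAnti.injective h.symm
      rw [if_neg fun hx => (by omega : ¬ beta p r ≤ beta p j - k - 1) hx.2.2] at hcount'
      rw [if_pos hjr]
      omega
    · have hjr : j ≠ r := fun hjr => by subst hjr; omega
      rw [if_pos ⟨hmem, Int.modEq_iff_add_fac.2 ⟨m + 1, by linear_combination hm⟩, by omega⟩]
        at hcount'
      rw [if_neg hjr]
      omega
  · have hjr : j ≠ r := fun hjr => hj (hjr ▸ ⟨Int.ModEq.rfl, le_rfl⟩)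
    rw [if_neg hj, sub_zero] at hrow'
    have hcount' := hp.countAbove_removeCorners hP (beta p j - k - 1)
    rw [sub_add_cancel, if_neg fun h => hc.not_onRunnerAbove_beta_sub hp htop hr j h.2] at hcount'
    rw [if_neg hjr]
    omega

lemma colKB_removeAll_le (hr : 0 < p r) (j : ℕ) :
    colKB k (removeAll k (res k r (p r - 1)) p) j ≤ colKB k p j := by
  have hP := hc.removable_of_onRunnerAbove hp htop hr
  rw [hc.removeAll_eq_removeCorners hp htop hr]
  have hcol' := (isPartitionFun_removeCorners hP hp).colKB_add_countAbove k j
  have hcol := hp.colKB_add_countAbove k j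
  have hconj := hp.conjFun_removeCorners hP j
  rw [hp.gap_removeCorners hP j] at hcol'
  set g := gap p j
  by_cases hg : g + 1 ∈ betaSet p ∧ OnRunnerAbove (k + 1) (beta p r) (g + 1)
  · -- the bead `g + 1` moves down into the gap, so the window loses it, and the new top
    -- position `g + 1 + k` is not a bead
    rw [if_pos hg] at hcol' hconj
    have hcount' := hp.countAbove_removeCorners hP (g + 1 + k)
    have hcount := hp.countAbove_sub_one (g + 1 + k)
    obtain ⟨m, hm⟩ := Int.modEq_iff_add_fac.1 hg.2.1
    have hnot : g + 1 + k ∉ betaSet p := hc.notMem_betaSet_of_onRunnerAbove hp htop hr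
      ⟨Int.modEq_iff_add_fac.2 ⟨m - 1, by linear_combination hm⟩, by linarith [hg.2.2]⟩
    rw [show g + 1 + k - 1 = g + k by ring, if_neg hnot] at hcount
    split_ifs at hcount' <;> omega
  · simp only [if_neg hg, add_zero] at hcol' hconj
    have hcount' := hp.countAbove_removeCorners hP (g + k)
    have hnot : ¬ (g + k + 1 ∈ betaSet p ∧ OnRunnerAbove (k + 1) (beta p r) (g + k + 1)) :=
      fun h => hp.gap_notMem_betaSet j (by simpa using hc.sub_mem_betaSet hp h.1)
    rw [if_neg hnot] at hcount'
    omega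

end IsCore

end TopRow

theorem stmt18_general (k : ℕ) (μ δ : ℕ → ℕ)
    (hδ : IsPartitionFun δ) (hδcore : IsCore (k + 1) δ) (hδc : ∀ j, μ j = rowKB k δ j)
    (r : ℕ)
    (hr : 0 < δ r ∧ δ (r + 1) < δ r)
    (hhigh : ∀ r', r < r' → ¬ (0 < δ r' ∧ δ (r' + 1) < δ r')) :
    (∀ r', r < r' → ¬ (0 < δ r' ∧ δ (r' + 1) < δ r' ∧
        res k r' (δ r' - 1) = res k r (δ r - 1))) ∧
    (∀ j, rowKB k (removeAll k (res k r (δ r - 1)) δ) j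
        = (if j = r then μ j - 1 else μ j)) ∧
    (∀ j, (if j = r then μ j - 1 else μ j) ≤ μ j) ∧
    (∀ c, colKB k (removeAll k (res k r (δ r - 1)) δ) c ≤ colKB k δ c) := by
  have htop := hδ.eq_zero_of_forall_not_removable hhigh
  refine ⟨fun r' hr' h => hhigh r' hr' ⟨h.1, h.2.1⟩, fun j => ?_, fun j => by split_ifs <;> omega,
    hδcore.colKB_removeAll_le hδ htop hr.1⟩
  have hrow := hδcore.rowKB_removeAll hδ htop hr.1 j
  rw [hδc j]
  split_ifs at hrow ⊢ <;> omega

/-- Let `μ` be a `k`-bounded partition and `δ = 𝔠(μ)`.  Let `r` be the highest row of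
`δ` containing a removable corner and `i` its residue.  Then no removable corner of
residue `i` lies higher, and removing all removable corners of residue `i` from `δ`
gives the `(k+1)`-core of `μ - e_r`; moreover `μ - e_r ⊆ μ` and
`(μ - e_r)^{ω_k} ⊆ μ^{ω_k}`. -/
theorem stmt18 (k : ℕ) (μ δ : ℕ → ℕ)
    (hμ : IsPartitionFun μ) (hμb : ∀ i, μ i ≤ k)
    (hδ : IsPartitionFun δ) (hδcore : IsCore (k + 1) δ) (hδc : ∀ j, μ j = rowKB k δ j)
    (r : ℕ)
    (hr : 0 < δ r ∧ δ (r + 1) < δ r)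
    (hhigh : ∀ r', r < r' → ¬ (0 < δ r' ∧ δ (r' + 1) < δ r')) :
    (∀ r', r < r' → ¬ (0 < δ r' ∧ δ (r' + 1) < δ r' ∧
        res k r' (δ r' - 1) = res k r (δ r - 1))) ∧
    (∀ j, rowKB k (removeAll k (res k r (δ r - 1)) δ) j
        = (if j = r then μ j - 1 else μ j)) ∧
    (∀ j, (if j = r then μ j - 1 else μ j) ≤ μ j) ∧
    (∀ c, colKB k (removeAll k (res k r (δ r - 1)) δ) c ≤ colKB k δ c) :=
  stmt18_general k μ δ hδ hδcore hδc r hr hhigh
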